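/- arXiv:1309.0893 — 2 statements merged into one kernel-verified Lean document; each statement's English description precedes it below -/
import Mathlib

section
/- Let X be an arbitrary set and let s, t be μ-expressions in T X. The following are equivalent: (i) for every μ-continuous Chomsky algebra K and every interpretation σ : T X → K, σ(s) = σ(t); (ii) for every set Y and every map from X to languages over Y, the structurally induced language interpretation τ : T X → P(Y*) (with τ a homomorphism for the semiring operations on languages and τ(μx.t) = ⋃_{n≥0} τ(nx.t)) satisfies τ(s) = τ(t); (iii) L_X(s) = L_X(t) for the canonical interpretation L_X. -/
/-- μ-expressions over a set `X` of variables: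
`t ::= x | t + t | t·t | 0 | 1 | μx.t`. -/
inductive MuTerm (X : Type) : Type
  | var : X → MuTerm X
  | zero : MuTerm X
  | one : MuTerm X
  | add : MuTerm X → MuTerm X → MuTerm X
  | mul : MuTerm X → MuTerm X → MuTerm X
  | mu : X → MuTerm X → MuTerm X

namespace MuTerm

variable {X : Type}

/-- Size of a term (used for termination of substitution). -/
def size : MuTerm X → ℕ
  | var _ => 1
  | zero => 1
  | one => 1
  | add s t => size s + size t + 1
  | mul s t => size s + size t + 1
  | mu _ t => size t + 1

variable [DecidableEq X]

/-- Free variables of a μ-expression. -/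
def fv : MuTerm X → Finset X
  | var x => {x}
  | zero => ∅
  | one => ∅
  | add s t => fv s ∪ fv t
  | mul s t => fv s ∪ fv t
  | mu x t => fv t \ {x}

/-- All (free and bound) variables of a μ-expression. -/
def vars : MuTerm X → Finset X
  | var x => {x}
  | zero => ∅
  | one => ∅
  | add s t => vars s ∪ vars t
  | mul s t => vars s ∪ vars t
  | mu x t => insert x (vars t)

/-- Rename free occurrences of the variable `y` to `z`. -/
def rename (y z : X) : MuTerm X → MuTerm X
  | var x => if x = y then var z else var x
  | zero => zero
  | one => one
  | add s t => add (rename y z s) (rename y z t)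
  | mul s t => mul (rename y z s) (rename y z t)
  | mu x t => if x = y then mu x t else mu x (rename y z t)

theorem size_rename (y z : X) : ∀ t : MuTerm X, (rename y z t).size = t.size
  | var x => by simp only [rename]; split <;> rfl
  | zero => rfl
  | one => rfl
  | add s t => by simp [rename, size, size_rename y z s, size_rename y z t]
  | mul s t => by simp [rename, size, size_rename y z s, size_rename y z t]
  | mu x t => by
      simp only [rename]; split
      · rfl
      · simp [size, size_rename y z t]

variable [Infinite X]

/-- Capture-avoiding substitution `t[x := u]`: substitute `u` for the free
occurrences of `x` in the last argument, renaming bound variables to fresh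
ones to avoid capture. -/
noncomputable def subst (x : X) (u : MuTerm X) : MuTerm X → MuTerm X
  | var y => if y = x then u else var y
  | zero => zero
  | one => one
  | add s t => add (subst x u s) (subst x u t)
  | mul s t => mul (subst x u s) (subst x u t)
  | mu y t =>
    if y = x then mu y t
    else
      let z : X := Classical.choose (Infinite.exists_notMem_finset (vars t ∪ fv u ∪ {x}))
      mu z (subst x u (rename y z t))
  termination_by t => size t
  decreasing_by
    all_goals simp only [size, size_rename]
    all_goals omega

/-- The `n`-th approximant `nx.t`: `0x.t = 0`, `(n+1)x.t = t[x := nx.t]`. -/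
noncomputable def napprox : ℕ → X → MuTerm X → MuTerm X
  | 0, _, _ => zero
  | n + 1, x, t => subst x (napprox n x t) t

end MuTerm

/-- Polynomial functions over a semiring `C` in `n` indeterminates: functions
built from constants in `C`, projections, addition, and multiplication. -/
inductive IsPolyFun {C : Type} [Semiring C] : {n : ℕ} → ((Fin n → C) → C) → Prop
  | const {n : ℕ} (c : C) : IsPolyFun fun _ : Fin n → C => c
  | proj {n : ℕ} (i : Fin n) : IsPolyFun fun v => v i
  | add {n : ℕ} {p q : (Fin n → C) → C} :
      IsPolyFun p → IsPolyFun q → IsPolyFun fun v => p v + q v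
  | mul {n : ℕ} {p q : (Fin n → C) → C} :
      IsPolyFun p → IsPolyFun q → IsPolyFun fun v => p v * q v

/-- A Chomsky algebra is an idempotent semiring (ordered by `a ≤ b ↔ a + b = b`)
in which every finite system of polynomial inequalities `pᵢ ≤ xᵢ` has a least
solution. -/
class ChomskyAlgebra (C : Type) extends IdemSemiring C where
  algClosed : ∀ {n : ℕ} (p : Fin n → (Fin n → C) → C), (∀ i, IsPolyFun (p i)) →
    ∃ sol : Fin n → C, (∀ i, p i sol ≤ sol i) ∧
      ∀ τ : Fin n → C, (∀ i, p i τ ≤ τ i) → ∀ i, sol i ≤ τ i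

/-- `IsInterp eval` says that `eval` is the family of interpretations of
μ-expressions over the Chomsky algebra `C`, one for each valuation `v : X → C`:
each `eval v` is a homomorphism with respect to the semiring operations, and
`eval v (μx.t)` is the least `a` with `eval v[x↦a] t ≤ a`. -/
structure IsInterp {X C : Type} [DecidableEq X] [Infinite X] [ChomskyAlgebra C]
    (eval : (X → C) → MuTerm X → C) : Prop where
  var : ∀ (v : X → C) (x : X), eval v (.var x) = v x
  zero : ∀ v, eval v .zero = 0
  one : ∀ v, eval v .one = 1
  add : ∀ v s t, eval v (.add s t) = eval v s + eval v t
  mul : ∀ v s t, eval v (.mul s t) = eval v s * eval v t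
  mu : ∀ (v : X → C) (x : X) (t : MuTerm X),
    IsLeast {a : C | eval (Function.update v x a) t ≤ a} (eval v (.mu x t))

/-- A Chomsky algebra `C` is μ-continuous if for every interpretation `σ` over
`C`, all `c, d ∈ C`, and every term `t`,
`c·σ(μx.t)·d = sup_{n ≥ 0} c·σ(nx.t)·d` (in particular the supremum exists). -/
def MuContinuous (C : Type) [ChomskyAlgebra C] : Prop :=
  ∀ (X : Type) [DecidableEq X] [Infinite X] (eval : (X → C) → MuTerm X → C),
    IsInterp eval → ∀ (v : X → C) (c d : C) (x : X) (t : MuTerm X),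
      IsLUB (Set.range fun n : ℕ => c * eval v (MuTerm.napprox n x t) * d)
        (c * eval v (.mu x t) * d)

/-- A language interpretation `τ : T X → P(Y*)`: a homomorphism for the
semiring operations on languages with `τ(μx.t) = ⋃ n, τ(nx.t)`. -/
structure IsLangInterp {X Y : Type} [DecidableEq X] [Infinite X]
    (τ : MuTerm X → Language Y) : Prop where
  zero : τ .zero = 0
  one : τ .one = 1
  add : ∀ s t, τ (.add s t) = τ s + τ t
  mul : ∀ s t, τ (.mul s t) = τ s * τ t
  mu : ∀ (x : X) (t : MuTerm X), τ (.mu x t) = ⨆ n : ℕ, τ (MuTerm.napprox n x t)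

/-- The canonical interpretation `L_X : T X → P(X*)`: the language
interpretation with `L_X(x) = {x}`. -/
def IsCanonicalInterp {X : Type} [DecidableEq X] [Infinite X]
    (L : MuTerm X → Language X) : Prop :=
  IsLangInterp L ∧ ∀ x : X, L (.var x) = {[x]}

/-- For a word `w = x₁⋯x_k ∈ X*` and `σ : X → K`, `wordProd σ w` is the
product `σ(x₁)⋯σ(x_k)` in `K`, with the empty word mapped to `1`. -/
def wordProd {X K : Type} [Monoid K] (σ : X → K) (w : List X) : K :=
  (w.map σ).prod

/-- `IsLangEval E` says that `E` is the family of structurally induced language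
interpretations, one for each assignment `σ : X → P(Y*)` of languages to
variables: each `E σ` is a homomorphism for the semiring operations on
languages, with `E σ (μx.t) = ⋃ n, E σ (nx.t)`. -/
structure IsLangEval {X Y : Type} [DecidableEq X] [Infinite X]
    (E : (X → Language Y) → MuTerm X → Language Y) : Prop where
  var : ∀ (σ : X → Language Y) (x : X), E σ (.var x) = σ x
  zero : ∀ σ, E σ .zero = 0
  one : ∀ σ, E σ .one = 1
  add : ∀ σ s t, E σ (.add s t) = E σ s + E σ t
  mul : ∀ σ s t, E σ (.mul s t) = E σ s * E σ t
  mu : ∀ (σ : X → Language Y) (x : X) (t : MuTerm X),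
    E σ (.mu x t) = ⨆ n : ℕ, E σ (MuTerm.napprox n x t)

/-!
The language semantics `langEval` reads `μx.t` as the union of the Kleene iterates of
`a ↦ t[x ↦ a]`. Every language interpretation `τ` with `τ(x) = σ(x)` coincides with
`langEval σ`, and `langEval` is itself an interpretation over the μ-continuous Chomsky algebra
of languages; this gives (i) ⇒ (ii) ⇒ (iii). For (iii) ⇒ (i): in a μ-continuous Chomsky
algebra the value of `t` under `v` is the supremum of the products `v(x₁)⋯v(xₖ)` over the
words `x₁⋯xₖ` of `L_X(t)`. Suprema of this kind pass through `+`, `·` and unions of chains as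
long as they are stable under multiplication on both sides, and μ-continuity provides exactly
that for the Kleene iterates. So the value of `t` depends only on `L_X(t)`.

The uniqueness of language interpretations is where the syntax bites: the approximants of
`μw.B` are not subterms of it, and they are built by capture-avoiding substitution with
arbitrarily chosen fresh names. The induction therefore runs over a skeleton `b` and all of
its instances, compared through a locally nameless representation in which α-equivalent
terms coincide.
-/
theorem Monotone.iterate_comp_update {α β : Type} [DecidableEq α] [Preorder β]
    {g : (α → β) → β} (hg : Monotone g) (x : α) (n : ℕ) (b : β) :
    Monotone fun σ : α → β => (fun a => g (Function.update σ x a))^[n] b :=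
  fun _ _ h => (hg.comp Function.update_mono).iterate_le_of_le
    (fun _ => hg (update_le_update_iff.2 ⟨le_rfl, fun j _ => h j⟩)) n b

theorem Function.update_iSup {ι α β : Type} [DecidableEq α] [CompleteLattice β]
    (f : ι → α → β) (x : α) (a : ι → β) :
    Function.update (⨆ i, f i) x (⨆ i, a i) = ⨆ i, Function.update (f i) x (a i) := by
  funext z
  rcases eq_or_ne z x with rfl | hz <;> simp [iSup_apply, *]

namespace MuTerm

variable {X : Type} [DecidableEq X]

theorem mem_vars_of_mem_fv {y : X} : ∀ {t : MuTerm X}, y ∈ t.fv → y ∈ t.vars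
  | var _, h => h
  | add s t, h | mul s t, h => by
      simp only [fv, vars, Finset.mem_union] at h ⊢
      exact h.imp mem_vars_of_mem_fv mem_vars_of_mem_fv
  | mu x t, h => by
      simp only [fv, Finset.mem_sdiff] at h
      exact Finset.mem_insert_of_mem (mem_vars_of_mem_fv h.1)

variable [Infinite X]

/-- The fresh name that `MuTerm.subst` gives a bound variable. -/
noncomputable def freshVar (t u : MuTerm X) (x : X) : X :=
  Classical.choose (Infinite.exists_notMem_finset (t.vars ∪ u.fv ∪ {x}))

theorem freshVar_spec (t u : MuTerm X) (x : X) :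
    freshVar t u x ∉ t.vars ∧ freshVar t u x ∉ u.fv ∧ freshVar t u x ≠ x := by
  have h : freshVar t u x ∉ t.vars ∪ u.fv ∪ {x} :=
    Classical.choose_spec (Infinite.exists_notMem_finset _)
  simp only [Finset.mem_union, Finset.mem_singleton, not_or] at h
  exact ⟨h.1.1, h.1.2, h.2⟩

@[simp] theorem subst_var (x : X) (u : MuTerm X) (y : X) :
    subst x u (var y) = if y = x then u else var y := by simp [subst]

@[simp] theorem subst_zero (x : X) (u : MuTerm X) : subst x u zero = zero := by simp [subst]

@[simp] theorem subst_one (x : X) (u : MuTerm X) : subst x u one = one := by simp [subst]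

@[simp] theorem subst_add (x : X) (u s t : MuTerm X) :
    subst x u (add s t) = add (subst x u s) (subst x u t) := by simp [subst]

@[simp] theorem subst_mul (x : X) (u s t : MuTerm X) :
    subst x u (mul s t) = mul (subst x u s) (subst x u t) := by simp [subst]

theorem subst_mu_self (x : X) (u t : MuTerm X) : subst x u (mu x t) = mu x t := by
  simp [subst]

theorem subst_mu_of_ne (x : X) (u : MuTerm X) {y : X} (t : MuTerm X) (h : y ≠ x) :
    subst x u (mu y t) = mu (freshVar t u x) (subst x u (rename y (freshVar t u x) t)) := by
  simp [subst, h, freshVar]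

end MuTerm

/-- Locally nameless μ-expressions: bound variables are de Bruijn indices, so that
α-equivalent μ-expressions have the same image. -/
inductive LNTerm (X : Type) : Type
  | zero : LNTerm X
  | one : LNTerm X
  | fvar : X → LNTerm X
  | bvar : ℕ → LNTerm X
  | add : LNTerm X → LNTerm X → LNTerm X
  | mul : LNTerm X → LNTerm X → LNTerm X
  | mu : LNTerm X → LNTerm X

namespace LNTerm

variable {X : Type}

def instantiate (A : LNTerm X) : ℕ → LNTerm X → LNTerm X
  | _, zero => zero
  | _, one => one
  | _, fvar y => fvar y
  | k, bvar j => if j = k then A else bvar j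
  | k, add s t => add (instantiate A k s) (instantiate A k t)
  | k, mul s t => mul (instantiate A k s) (instantiate A k t)
  | k, mu t => mu (instantiate A (k + 1) t)

def subst (v : X → LNTerm X) : LNTerm X → LNTerm X
  | zero => zero
  | one => one
  | fvar y => v y
  | bvar j => bvar j
  | add s t => add (subst v s) (subst v t)
  | mul s t => mul (subst v s) (subst v t)
  | mu t => mu (subst v t)

/-- Locally closed at level `k`: every bound index is below `k`. -/
def LcAt : ℕ → LNTerm X → Prop
  | _, zero | _, one | _, fvar _ => True
  | k, bvar j => j < k
  | k, add s t | k, mul s t => LcAt k s ∧ LcAt k t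
  | k, mu t => LcAt (k + 1) t

theorem instantiate_of_lcAt {A : LNTerm X} :
    ∀ {D : LNTerm X} {k j : ℕ}, LcAt k D → k ≤ j → instantiate A j D = D
  | zero, _, _, _, _ | one, _, _, _, _ | fvar _, _, _, _, _ => rfl
  | bvar i, k, j, h, hkj => by
      simp only [LcAt] at h
      simp [instantiate, show i ≠ j by omega]
  | add s t, _, _, h, hkj | mul s t, _, _, h, hkj => by
      simp [instantiate, instantiate_of_lcAt h.1 hkj, instantiate_of_lcAt h.2 hkj]
  | mu t, _, _, h, hkj => by
      simp [instantiate, instantiate_of_lcAt (k := _ + 1) h (Nat.succ_le_succ hkj)]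

theorem subst_subst (v v' : X → LNTerm X) :
    ∀ D : LNTerm X, subst v (subst v' D) = subst (fun y => subst v (v' y)) D
  | zero | one | fvar _ | bvar _ => rfl
  | add s t | mul s t => by simp [subst, subst_subst v v' s, subst_subst v v' t]
  | mu t => by simp [subst, subst_subst v v' t]

theorem subst_fvar : ∀ D : LNTerm X, subst fvar D = D
  | zero | one | fvar _ | bvar _ => rfl
  | add s t | mul s t => by simp [subst, subst_fvar s, subst_fvar t]
  | mu t => by simp [subst, subst_fvar t]

variable [DecidableEq X]

def close (x : X) : ℕ → LNTerm X → LNTerm X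
  | _, zero => zero
  | _, one => one
  | k, fvar y => if y = x then bvar k else fvar y
  | _, bvar j => bvar j
  | k, add s t => add (close x k s) (close x k t)
  | k, mul s t => mul (close x k s) (close x k t)
  | k, mu t => mu (close x (k + 1) t)

def fv : LNTerm X → Finset X
  | zero | one | bvar _ => ∅
  | fvar y => {y}
  | add s t | mul s t => fv s ∪ fv t
  | mu t => fv t

theorem close_of_notMem_fv {x : X} : ∀ {D : LNTerm X}, x ∉ D.fv → ∀ k, close x k D = D
  | zero, _, _ | one, _, _ | bvar _, _, _ => rfl
  | fvar y, h, k => by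
      simp only [fv, Finset.mem_singleton] at h
      simp [close, Ne.symm h]
  | add s t, h, k | mul s t, h, k => by
      simp only [fv, Finset.mem_union, not_or] at h
      simp [close, close_of_notMem_fv h.1, close_of_notMem_fv h.2]
  | mu t, h, k => by
      simp only [fv] at h
      simp [close, close_of_notMem_fv h]

theorem fv_close (x : X) : ∀ (D : LNTerm X) (k : ℕ), (close x k D).fv = D.fv \ {x}
  | zero, _ | one, _ | bvar _, _ => by simp [close, fv]
  | fvar y, k => by
      by_cases h : y = x
      · simp [close, fv, h]
      · simp [close, fv, h, Finset.sdiff_singleton_eq_erase, Ne.symm h]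
  | add s t, k | mul s t, k => by
      simp [close, fv, fv_close x s, fv_close x t, Finset.union_sdiff_distrib]
  | mu t, k => by simp [close, fv, fv_close x t]

theorem lcAt_close (x : X) : ∀ (D : LNTerm X) (k : ℕ), LcAt k D → LcAt (k + 1) (close x k D)
  | zero, _, _ | one, _, _ => trivial
  | fvar y, k, _ => by
      simp only [close]
      split
      · simp [LcAt]
      · trivial
  | bvar j, k, h => by simp only [LcAt, close] at *; omega
  | add s t, k, h | mul s t, k, h => ⟨lcAt_close x s k h.1, lcAt_close x t k h.2⟩
  | mu t, k, h => lcAt_close x t (k + 1) h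

theorem subst_update_close_self (x : X) (U : LNTerm X) :
    ∀ (D : LNTerm X) (k : ℕ), subst (Function.update fvar x U) (close x k D) = close x k D
  | zero, _ | one, _ | bvar _, _ => rfl
  | fvar y, k => by
      by_cases h : y = x <;> simp [close, h, subst]
  | add s t, k | mul s t, k => by
      simp [close, subst, subst_update_close_self x U s, subst_update_close_self x U t]
  | mu t, k => by simp [close, subst, subst_update_close_self x U t]

theorem subst_close_comm {v : X → LNTerm X} {w : X} (hw : v w = fvar w)
    (hv : ∀ x, x ≠ w → ∀ k, close w k (v x) = v x) :
    ∀ (D : LNTerm X) (k : ℕ), subst v (close w k D) = close w k (subst v D)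
  | zero, _ | one, _ | bvar _, _ => rfl
  | fvar y, k => by
      by_cases h : y = w
      · subst h; simp [close, subst, hw]
      · simp [close, h, subst, hv y h]
  | add s t, k | mul s t, k => by
      simp [close, subst, subst_close_comm hw hv s, subst_close_comm hw hv t]
  | mu t, k => by simp [close, subst, subst_close_comm hw hv t]

/-- α-renaming: for a fresh `z`, renaming `y` to `z` and closing `z` is closing `y`. -/
theorem close_subst_rename {x y z : X} {U : LNTerm X} (hzx : z ≠ x) (hxy : x ≠ y)
    (hU : ∀ j, close z j U = U) :
    ∀ {D : LNTerm X}, z ∉ D.fv → ∀ k,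
      close z k (subst (fun w => if w = y then fvar z else if w = x then U else fvar w) D) =
        subst (Function.update fvar x U) (close y k D)
  | zero, _, _ | one, _, _ | bvar _, _, _ => rfl
  | fvar w, hz, k => by
      simp only [fv, Finset.mem_singleton] at hz
      by_cases hwy : w = y
      · subst hwy; simp [close, subst]
      · by_cases hwx : w = x
        · subst hwx; simp [close, subst, hwy, hU]
        · simp [close, subst, hwy, hwx, Ne.symm hz]
  | add s t, hz, k | mul s t, hz, k => by
      simp only [fv, Finset.mem_union, not_or] at hz
      simp [close, subst, close_subst_rename hzx hxy hU hz.1, close_subst_rename hzx hxy hU hz.2]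
  | mu t, hz, k => by
      simp only [fv] at hz
      simp [close, subst, close_subst_rename hzx hxy hU hz]

theorem subst_update_eq_instantiate_close {x : X} {A : LNTerm X} :
    ∀ {D : LNTerm X} {k : ℕ}, LcAt k D →
      subst (Function.update fvar x A) D = instantiate A k (close x k D)
  | zero, _, _ | one, _, _ => rfl
  | fvar y, k, _ => by
      by_cases h : y = x
      · subst h; simp [close, subst, instantiate]
      · simp [close, h, subst, instantiate]
  | bvar j, k, h => by
      simp only [LcAt] at h
      simp [close, subst, instantiate, show j ≠ k by omega]
  | add s t, _, h | mul s t, _, h => by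
      simp [close, subst, instantiate, subst_update_eq_instantiate_close h.1,
        subst_update_eq_instantiate_close h.2]
  | mu t, k, h => by
      simp [close, subst, instantiate, subst_update_eq_instantiate_close (k := k + 1) h]

theorem instantiate_subst_close {A : LNTerm X} {v : X → LNTerm X} {w : X}
    (hv : ∀ y j, instantiate A j (v y) = v y) :
    ∀ {D : LNTerm X} {k : ℕ}, LcAt k D →
      instantiate A k (subst v (close w k D)) = subst (Function.update v w A) D
  | zero, _, _ | one, _, _ => rfl
  | fvar y, k, _ => by
      by_cases h : y = w
      · subst h; simp [close, subst, instantiate]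
      · simp [close, h, subst, hv]
  | bvar j, k, h => by
      simp only [LcAt] at h
      simp [close, subst, instantiate, show j ≠ k by omega]
  | add s t, _, h | mul s t, _, h => by
      simp [close, subst, instantiate, instantiate_subst_close hv h.1,
        instantiate_subst_close hv h.2]
  | mu t, k, h => by
      simp [close, subst, instantiate, instantiate_subst_close hv (k := k + 1) h]

end LNTerm

namespace MuTerm

variable {X : Type} [DecidableEq X]

def toLN : MuTerm X → LNTerm X
  | var x => .fvar x
  | zero => .zero
  | one => .one
  | add s t => .add s.toLN t.toLN
  | mul s t => .mul s.toLN t.toLN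
  | mu x t => .mu (t.toLN.close x 0)

theorem lcAt_toLN : ∀ t : MuTerm X, t.toLN.LcAt 0
  | var _ | zero | one => trivial
  | add s t | mul s t => ⟨lcAt_toLN s, lcAt_toLN t⟩
  | mu x t => LNTerm.lcAt_close x _ 0 (lcAt_toLN t)

theorem fv_toLN : ∀ t : MuTerm X, t.toLN.fv = t.fv
  | var _ | zero | one => rfl
  | add s t | mul s t => by simp [toLN, LNTerm.fv, fv, fv_toLN s, fv_toLN t]
  | mu x t => by simp [toLN, LNTerm.fv, fv, LNTerm.fv_close, fv_toLN t]

theorem toLN_rename {z : X} (y : X) :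
    ∀ t : MuTerm X, z ∉ t.vars →
      (rename y z t).toLN = t.toLN.subst (Function.update .fvar y (.fvar z))
  | var w, _ => by
      by_cases h : w = y
      · subst h; simp [rename, toLN, LNTerm.subst]
      · simp [rename, h, toLN, LNTerm.subst]
  | zero, _ | one, _ => rfl
  | add s t, hz | mul s t, hz => by
      simp only [vars, Finset.mem_union, not_or] at hz
      simp [rename, toLN, LNTerm.subst, toLN_rename y s hz.1, toLN_rename y t hz.2]
  | mu w t, hz => by
      simp only [vars, Finset.mem_insert, not_or] at hz
      by_cases h : w = y
      · subst h
        simp only [rename, ↓reduceIte, toLN, LNTerm.subst, LNTerm.subst_update_close_self]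
      · simp only [rename, if_neg h, toLN, LNTerm.subst]
        rw [toLN_rename y t hz.2, LNTerm.subst_close_comm (Function.update_of_ne h _ _)]
        intro x hx k
        refine LNTerm.close_of_notMem_fv ?_ k
        by_cases hxy : x = y
        · simp [hxy, LNTerm.fv, Ne.symm hz.1]
        · simp [hxy, LNTerm.fv, Ne.symm hx]

variable [Infinite X]

theorem toLN_subst (x : X) (u : MuTerm X) :
    ∀ t : MuTerm X, (subst x u t).toLN = t.toLN.subst (Function.update .fvar x u.toLN)
  | var y => by
      by_cases h : y = x
      · subst h; simp [toLN, LNTerm.subst]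
      · simp [h, toLN, LNTerm.subst]
  | zero | one => by simp [toLN, LNTerm.subst]
  | add s t | mul s t => by simp [toLN, LNTerm.subst, toLN_subst x u s, toLN_subst x u t]
  | mu y t => by
      by_cases h : y = x
      · subst h
        simp only [subst_mu_self, toLN, LNTerm.subst, LNTerm.subst_update_close_self]
      · rw [subst_mu_of_ne x u t h]
        obtain ⟨hzt, hzu, hzx⟩ := freshVar_spec t u x
        set z := freshVar t u x
        have hrename : ∀ w, (Function.update LNTerm.fvar y (LNTerm.fvar z) w).subst
            (Function.update .fvar x u.toLN) =
            if w = y then .fvar z else if w = x then u.toLN else .fvar w := by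
          intro w
          by_cases hwy : w = y
          · simp [hwy, LNTerm.subst, hzx]
          · simp [hwy, LNTerm.subst, Function.update_apply]
        simp only [toLN, LNTerm.subst]
        rw [toLN_subst x u (rename y z t), toLN_rename y t hzt, LNTerm.subst_subst,
          funext hrename, LNTerm.close_subst_rename hzx (Ne.symm h)
            (LNTerm.close_of_notMem_fv (by rwa [fv_toLN]))
            (by rw [fv_toLN]; exact fun hz => hzt (mem_vars_of_mem_fv hz))]
  termination_by t => t.size
  decreasing_by all_goals simp only [size, size_rename]; omega

theorem toLN_subst_of_toLN_mu_eq {v : X → LNTerm X} (hv : ∀ y, (v y).LcAt 0) {w w' : X}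
    {b B : MuTerm X} (h : (mu w' B).toLN = (mu w b).toLN.subst v) (A : MuTerm X) :
    (subst w' A B).toLN = b.toLN.subst (Function.update v w A.toLN) := by
  simp only [toLN, LNTerm.subst, LNTerm.mu.injEq] at h
  rw [toLN_subst, LNTerm.subst_update_eq_instantiate_close (lcAt_toLN B), h,
    LNTerm.instantiate_subst_close (fun y j => LNTerm.instantiate_of_lcAt (hv y) j.zero_le)
      (lcAt_toLN b)]

end MuTerm

noncomputable def langEval {X Y : Type} [DecidableEq X] :
    (X → Language Y) → MuTerm X → Language Y
  | σ, .var x => σ x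
  | _, .zero => 0
  | _, .one => 1
  | σ, .add s t => langEval σ s + langEval σ t
  | σ, .mul s t => langEval σ s * langEval σ t
  | σ, .mu x t => ⨆ n : ℕ, (fun a => langEval (Function.update σ x a) t)^[n] 0

section LangInterp

variable {X Y : Type} [DecidableEq X] [Infinite X]

def ConstOnLN {α : Type} (τ : MuTerm X → α) (D : LNTerm X) (a : α) : Prop :=
  ∀ T : MuTerm X, T.toLN = D → τ T = a

/-- Induction on a skeleton `b` of which `T` is an instance, rather than on `T`: the
approximants of `μw'.B` are not subterms of it, but they are instances of the body `b`. -/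
theorem IsLangInterp.constOnLN_subst {τ : MuTerm X → Language Y} (hτ : IsLangInterp τ) :
    ∀ (b : MuTerm X) {v : X → LNTerm X} {ρ : X → Language Y}, (∀ y, (v y).LcAt 0) →
      (∀ y ∈ b.fv, ConstOnLN τ (v y) (ρ y)) → ConstOnLN τ (b.toLN.subst v) (langEval ρ b)
  | .var y, _, _, _, hv => hv y (by simp [MuTerm.fv])
  | .zero, _, _, _, _ => fun T hT => by
      cases T <;> simp [MuTerm.toLN, LNTerm.subst] at hT
      exact hτ.zero
  | .one, _, _, _, _ => fun T hT => by
      cases T <;> simp [MuTerm.toLN, LNTerm.subst] at hT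
      exact hτ.one
  | .add s t, _, _, hlc, hv => fun T hT => by
      cases T <;> simp only [MuTerm.toLN, LNTerm.subst, reduceCtorEq, LNTerm.add.injEq] at hT
      rw [hτ.add, hτ.constOnLN_subst s hlc (fun y hy => hv y (by simp [MuTerm.fv, hy])) _ hT.1,
        hτ.constOnLN_subst t hlc (fun y hy => hv y (by simp [MuTerm.fv, hy])) _ hT.2]
      rfl
  | .mul s t, _, _, hlc, hv => fun T hT => by
      cases T <;> simp only [MuTerm.toLN, LNTerm.subst, reduceCtorEq, LNTerm.mul.injEq] at hT
      rw [hτ.mul, hτ.constOnLN_subst s hlc (fun y hy => hv y (by simp [MuTerm.fv, hy])) _ hT.1,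
        hτ.constOnLN_subst t hlc (fun y hy => hv y (by simp [MuTerm.fv, hy])) _ hT.2]
      rfl
  | .mu w b, v, ρ, hlc, hv => fun T hT => by
      cases T with
      | mu w' B =>
        have happrox : ∀ n, ConstOnLN τ (MuTerm.napprox n w' B).toLN
            ((fun a => langEval (Function.update ρ w a) b)^[n] 0) := by
          intro n
          induction n with
          | zero =>
            intro T hT
            cases T <;> simp [MuTerm.toLN, MuTerm.napprox] at hT
            exact hτ.zero
          | succ n ih =>
            rw [Function.iterate_succ_apply', MuTerm.napprox,
              MuTerm.toLN_subst_of_toLN_mu_eq hlc hT]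
            refine hτ.constOnLN_subst b (fun y => ?_) (fun y hy => ?_)
            · rcases eq_or_ne y w with rfl | hyw
              · simpa using MuTerm.lcAt_toLN _
              · simpa [hyw] using hlc y
            · rcases eq_or_ne y w with rfl | hyw
              · simpa using ih
              · simpa [hyw] using hv y (by simp [MuTerm.fv, hy, hyw])
        rw [hτ.mu]
        exact iSup_congr fun n => happrox n _ rfl
      | _ => simp [MuTerm.toLN, LNTerm.subst] at hT

theorem IsLangInterp.eq_langEval {τ : MuTerm X → Language Y} (hτ : IsLangInterp τ)
    {σ : X → Language Y} (hvar : ∀ x, τ (.var x) = σ x) (t : MuTerm X) :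
    τ t = langEval σ t := by
  refine hτ.constOnLN_subst t (v := .fvar) (fun _ => trivial) (fun y _ T hT => ?_) t
    (LNTerm.subst_fvar _).symm
  cases T <;> simp [MuTerm.toLN] at hT
  rw [hT, hvar]

end LangInterp

section LangEval

variable {X Y : Type} [DecidableEq X]

theorem langEval_mono : ∀ t : MuTerm X, Monotone fun σ : X → Language Y => langEval σ t
  | .var x => fun _ _ h => h x
  | .zero | .one => fun _ _ _ => le_rfl
  | .add s t => fun _ _ h => add_le_add (langEval_mono s h) (langEval_mono t h)
  | .mul s t => fun _ _ h => mul_le_mul' (langEval_mono s h) (langEval_mono t h)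
  | .mu x t => fun _ _ h => iSup_mono fun n => (langEval_mono t).iterate_comp_update x n 0 h

theorem langEval_iSup : ∀ (t : MuTerm X) {σ : ℕ → X → Language Y}, Monotone σ →
    langEval (⨆ n, σ n) t = ⨆ n, langEval (σ n) t
  | .var x, _, _ => iSup_apply
  | .zero, _, _ | .one, _, _ => iSup_const.symm
  | .add s t, σ, hσ => by
      simp only [langEval, langEval_iSup s hσ, langEval_iSup t hσ, add_eq_sup, iSup_sup_eq]
  | .mul s t, σ, hσ => by
      simp only [langEval, langEval_iSup s hσ, langEval_iSup t hσ, Language.iSup_mul,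
        Language.mul_iSup]
      refine le_antisymm (iSup_le fun m => iSup_le fun n => ?_)
        (iSup_mono fun n => le_iSup_of_le n le_rfl)
      exact le_iSup_of_le (max m n) (mul_le_mul' (langEval_mono s (hσ (le_max_right m n)))
        (langEval_mono t (hσ (le_max_left m n))))
  | .mu y t, σ, hσ => by
      have hiter : ∀ m, (fun a => langEval (Function.update (⨆ n, σ n) y a) t)^[m] 0 =
          ⨆ n, (fun a => langEval (Function.update (σ n) y a) t)^[m] 0 := by
        intro m
        induction m with
        | zero => exact iSup_const.symm
        | succ m ih =>
          simp only [Function.iterate_succ_apply']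
          rw [ih, Function.update_iSup, langEval_iSup t fun n n' h =>
            update_le_update_iff.2 ⟨(langEval_mono t).iterate_comp_update y m 0 (hσ h),
              fun j _ => hσ h j⟩]
      simp only [langEval, hiter]
      exact iSup_comm

theorem IsPolyFun.monotone {C : Type} [IdemSemiring C] {n : ℕ} {p : (Fin n → C) → C}
    (hp : IsPolyFun p) : Monotone p := by
  induction hp with
  | const c => exact monotone_const
  | proj i => exact fun _ _ h => h i
  | add _ _ ihp ihq => exact fun _ _ h => add_le_add (ihp h) (ihq h)
  | mul _ _ ihp ihq => exact fun _ _ h => mul_le_mul' (ihp h) (ihq h)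

/-- Languages form a complete lattice, so the least solution is the meet of all solutions. -/
noncomputable instance Language.instChomskyAlgebra : ChomskyAlgebra (Language Y) where
  algClosed p hp := by
    set S := {τ | ∀ i, p i τ ≤ τ i}
    refine ⟨sInf S, fun i => ?_, fun τ hτ => sInf_le (s := S) hτ⟩
    rw [sInf_apply]
    exact le_iInf fun τ => ((hp i).monotone (sInf_le τ.2)).trans (τ.2 i)

end LangEval

namespace IsInterp

variable {X C : Type} [DecidableEq X] [Infinite X] [ChomskyAlgebra C]
  {eval : (X → C) → MuTerm X → C}

open Function

theorem eval_mu_congr (hev : IsInterp eval) {v v' : X → C} {x x' : X} {t t' : MuTerm X}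
    (h : ∀ a, eval (update v x a) t = eval (update v' x' a) t') :
    eval v (.mu x t) = eval v' (.mu x' t') :=
  (hev.mu v x t).unique (by simpa only [h] using hev.mu v' x' t')

theorem eval_congr (hev : IsInterp eval) :
    ∀ (t : MuTerm X) {v v' : X → C}, (∀ x ∈ t.fv, v x = v' x) → eval v t = eval v' t
  | .var x, _, _, h => by rw [hev.var, hev.var, h x (by simp [MuTerm.fv])]
  | .zero, _, _, _ => by rw [hev.zero, hev.zero]
  | .one, _, _, _ => by rw [hev.one, hev.one]
  | .add s t, _, _, h => by
      rw [hev.add, hev.add, hev.eval_congr s fun x hx => h x (by simp [MuTerm.fv, hx]),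
        hev.eval_congr t fun x hx => h x (by simp [MuTerm.fv, hx])]
  | .mul s t, _, _, h => by
      rw [hev.mul, hev.mul, hev.eval_congr s fun x hx => h x (by simp [MuTerm.fv, hx]),
        hev.eval_congr t fun x hx => h x (by simp [MuTerm.fv, hx])]
  | .mu x t, _, _, h => hev.eval_mu_congr fun a => hev.eval_congr t fun z hz => by
      rcases eq_or_ne z x with rfl | hzx
      · simp
      · simpa [hzx] using h z (by simp [MuTerm.fv, hz, hzx])

theorem eval_rename (hev : IsInterp eval) :
    ∀ (t : MuTerm X) {v : X → C} (y : X) {z : X}, z ∉ t.vars →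
      eval v (t.rename y z) = eval (update v y (v z)) t
  | .var w, _, y, _, _ => by
      rcases eq_or_ne w y with rfl | h
      · simp [MuTerm.rename, hev.var]
      · simp [MuTerm.rename, hev.var, h]
  | .zero, _, _, _, _ => by simp only [MuTerm.rename, hev.zero]
  | .one, _, _, _, _ => by simp only [MuTerm.rename, hev.one]
  | .add s t, _, y, _, hz => by
      simp only [MuTerm.vars, Finset.mem_union, not_or] at hz
      simp only [MuTerm.rename, hev.add, hev.eval_rename s y hz.1, hev.eval_rename t y hz.2]
  | .mul s t, _, y, _, hz => by
      simp only [MuTerm.vars, Finset.mem_union, not_or] at hz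
      simp only [MuTerm.rename, hev.mul, hev.eval_rename s y hz.1, hev.eval_rename t y hz.2]
  | .mu w t, v, y, z, hz => by
      simp only [MuTerm.vars, Finset.mem_insert, not_or] at hz
      rcases eq_or_ne w y with rfl | h
      · simp only [MuTerm.rename, ↓reduceIte]
        refine hev.eval_congr _ fun x hx => ?_
        simp only [MuTerm.fv, Finset.mem_sdiff, Finset.mem_singleton] at hx
        rw [update_of_ne hx.2]
      · simp only [MuTerm.rename, if_neg h]
        refine hev.eval_mu_congr fun a => ?_
        rw [hev.eval_rename t y hz.2, update_of_ne hz.1, update_comm h]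

theorem eval_subst (hev : IsInterp eval) (x : X) (u : MuTerm X) :
    ∀ (t : MuTerm X) (v : X → C), eval v (MuTerm.subst x u t) = eval (update v x (eval v u)) t
  | .var y, v => by
      rcases eq_or_ne y x with rfl | h
      · simp [hev.var]
      · simp [hev.var, h]
  | .zero, v => by rw [MuTerm.subst_zero, hev.zero, hev.zero]
  | .one, v => by rw [MuTerm.subst_one, hev.one, hev.one]
  | .add s t, v => by
      rw [MuTerm.subst_add, hev.add, hev.add, hev.eval_subst x u s, hev.eval_subst x u t]
  | .mul s t, v => by
      rw [MuTerm.subst_mul, hev.mul, hev.mul, hev.eval_subst x u s, hev.eval_subst x u t]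
  | .mu y t, v => by
      rcases eq_or_ne y x with rfl | h
      · rw [MuTerm.subst_mu_self]
        refine hev.eval_congr _ fun w hw => ?_
        simp only [MuTerm.fv, Finset.mem_sdiff, Finset.mem_singleton] at hw
        rw [update_of_ne hw.2]
      · rw [MuTerm.subst_mu_of_ne x u t h]
        obtain ⟨hzt, hzu, hzx⟩ := MuTerm.freshVar_spec t u x
        set z := MuTerm.freshVar t u x
        refine hev.eval_mu_congr fun a => ?_
        have hu : eval (update v z a) u = eval v u :=
          hev.eval_congr u fun w hw => update_of_ne (by rintro rfl; exact hzu hw) _ _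
        rw [hev.eval_subst x u (t.rename y z), hev.eval_rename t y hzt, hu,
          update_of_ne hzx, update_self]
        refine hev.eval_congr t fun w hw => ?_
        have hwz : w ≠ z := by rintro rfl; exact hzt (MuTerm.mem_vars_of_mem_fv hw)
        rcases eq_or_ne w y with rfl | hwy
        · simp
        rcases eq_or_ne w x with rfl | hwx
        · simp [hwy]
        · simp [hwy, hwx, hwz]
  termination_by t => t.size
  decreasing_by all_goals simp only [MuTerm.size, MuTerm.size_rename]; omega

theorem eval_napprox (hev : IsInterp eval) (v : X → C) (x : X) (t : MuTerm X) :
    ∀ n, eval v (MuTerm.napprox n x t) = (fun a => eval (update v x a) t)^[n] 0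
  | 0 => hev.zero v
  | n + 1 => by
      rw [MuTerm.napprox, hev.eval_subst, hev.eval_napprox v x t n, iterate_succ_apply']

theorem unique {eval' : (X → C) → MuTerm X → C} (hev : IsInterp eval)
    (hev' : IsInterp eval') :
    ∀ (t : MuTerm X) (v : X → C), eval v t = eval' v t
  | .var x, v => by rw [hev.var, hev'.var]
  | .zero, v => by rw [hev.zero, hev'.zero]
  | .one, v => by rw [hev.one, hev'.one]
  | .add s t, v => by rw [hev.add, hev'.add, unique hev hev' s, unique hev hev' t]
  | .mul s t, v => by rw [hev.mul, hev'.mul, unique hev hev' s, unique hev hev' t]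
  | .mu x t, v => (hev.mu v x t).unique (by simpa only [unique hev hev' t] using hev'.mu v x t)

end IsInterp

section LangEvalInterp

variable {X Y : Type} [DecidableEq X] [Infinite X]

theorem isInterp_langEval :
    IsInterp (langEval : (X → Language Y) → MuTerm X → Language Y) := by
  refine ⟨fun _ _ => rfl, fun _ => rfl, fun _ => rfl, fun _ _ _ => rfl, fun _ _ _ => rfl,
    fun σ x t => ⟨?_, fun a (ha : langEval _ t ≤ a) => iSup_le fun n => ?_⟩⟩
  · set F := fun a => langEval (Function.update σ x a) t
    have hchain : Monotone fun n => Function.update σ x (F^[n] 0) := fun m n hmn =>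
      Function.update_mono (((langEval_mono t).comp Function.update_mono).monotone_iterate_of_le_map
        zero_le hmn)
    change F (⨆ n, F^[n] 0) ≤ ⨆ n, F^[n] 0
    calc F (⨆ n, F^[n] 0)
        = langEval (⨆ n, Function.update σ x (F^[n] 0)) t := by
          rw [← Function.update_iSup, iSup_const]
      _ = ⨆ n, F^[n + 1] 0 := by
          rw [langEval_iSup t hchain]
          simp only [Function.iterate_succ_apply', F]
      _ ≤ ⨆ n, F^[n] 0 := iSup_le fun n => le_iSup (fun n => F^[n] 0) (n + 1)
  · induction n with
    | zero => exact zero_le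
    | succ n ih =>
      rw [Function.iterate_succ_apply']
      exact (langEval_mono t (Function.update_mono ih)).trans ha

theorem isLangInterp_langEval (σ : X → Language Y) : IsLangInterp (langEval σ) :=
  ⟨rfl, rfl, fun _ _ => rfl, fun _ _ => rfl, fun x t => by
    simp only [isInterp_langEval.eval_napprox]
    rfl⟩

theorem isCanonicalInterp_langEval :
    IsCanonicalInterp (langEval fun x : X => ({[x]} : Language X)) :=
  ⟨isLangInterp_langEval _, fun _ => rfl⟩

theorem muContinuous_language : MuContinuous (Language Y) := by
  intro X _ _ eval hev v c d x t
  simp only [hev.unique isInterp_langEval, (isLangInterp_langEval v).mu, Language.mul_iSup,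
    Language.iSup_mul]
  exact isLUB_iSup

end LangEvalInterp

section WordSup

variable {X K : Type} [IdemSemiring K] (v : X → K)

/-- `a` is the supremum of the values `v(w)` of the words `w ∈ L`; asking this of every
`c * _ * d` (the two-sided form of μ-continuity) makes the notion stable under products. -/
def IsWordSup (L : Language X) (a : K) : Prop :=
  ∀ c d b : K, c * a * d ≤ b ↔ ∀ w ∈ L, c * wordProd v w * d ≤ b

variable {v}

theorem IsWordSup.unique {L : Language X} {a a' : K} (h : IsWordSup v L a) (h' : IsWordSup v L a') :
    a = a' := by
  have key : ∀ {a a'}, IsWordSup v L a → IsWordSup v L a' → a ≤ a' := fun h h' => by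
    simpa using (h 1 1 _).2 ((h' 1 1 _).1 (by simp))
  exact le_antisymm (key h h') (key h' h)

variable (v)

theorem isWordSup_zero : IsWordSup v 0 (0 : K) := fun c d b => by
  simp [zero_le, Language.notMem_zero]

theorem isWordSup_one : IsWordSup v 1 (1 : K) := fun c d b => by
  simp [Language.mem_one, wordProd]

theorem isWordSup_singleton (x : X) : IsWordSup v {[x]} (v x) := fun c d b => by
  have hmem : ∀ w, w ∈ ({[x]} : Language X) ↔ w = [x] := fun _ => Iff.rfl
  simp [hmem, wordProd]

variable {v}

theorem IsWordSup.add {L M : Language X} {a a' : K} (hL : IsWordSup v L a)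
    (hM : IsWordSup v M a') : IsWordSup v (L + M) (a + a') := fun c d b => by
  simp only [mul_add, add_mul, add_le_iff, hL c d b, hM c d b, Language.mem_add, or_imp,
    forall_and]

theorem IsWordSup.mul {L M : Language X} {a a' : K} (hL : IsWordSup v L a)
    (hM : IsWordSup v M a') : IsWordSup v (L * M) (a * a') := fun c d b => by
  calc c * (a * a') * d ≤ b
      ↔ ∀ w₁ ∈ L, c * wordProd v w₁ * (a' * d) ≤ b := by
        rw [← hL]; simp only [mul_assoc]
    _ ↔ ∀ w₁ ∈ L, ∀ w₂ ∈ M, c * wordProd v w₁ * wordProd v w₂ * d ≤ b := by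
      refine forall₂_congr fun w₁ _ => ?_
      rw [← mul_assoc, hM]
    _ ↔ ∀ w ∈ L * M, c * wordProd v w * d ≤ b := by
      constructor
      · rintro h w ⟨w₁, h₁, w₂, h₂, rfl⟩
        simpa [wordProd, mul_assoc] using h w₁ h₁ w₂ h₂
      · intro h w₁ h₁ w₂ h₂
        simpa [wordProd, mul_assoc] using h _ (Language.append_mem_mul h₁ h₂)

theorem IsWordSup.iSup {L : ℕ → Language X} {a : ℕ → K} {a' : K}
    (hL : ∀ n, IsWordSup v (L n) (a n))
    (ha : ∀ c d : K, IsLUB (Set.range fun n => c * a n * d) (c * a' * d)) :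
    IsWordSup v (⨆ n, L n) a' := fun c d b => by
  calc c * a' * d ≤ b ↔ ∀ n, c * a n * d ≤ b := by
        rw [isLUB_le_iff (ha c d), mem_upperBounds, Set.forall_mem_range]
    _ ↔ ∀ n, ∀ w ∈ L n, c * wordProd v w * d ≤ b := forall_congr' fun n => hL n c d b
    _ ↔ ∀ w ∈ ⨆ n, L n, c * wordProd v w * d ≤ b := by
      simp only [Language.mem_iSup]
      exact ⟨fun h w ⟨n, hw⟩ => h n w hw, fun h n w hw => h w ⟨n, hw⟩⟩

end WordSup

namespace IsInterp

variable {X K : Type} [DecidableEq X] [Infinite X] [ChomskyAlgebra K]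
  {eval : (X → K) → MuTerm X → K}

theorem isWordSup_eval (hK : MuContinuous K) (hev : IsInterp eval) (v : X → K) :
    ∀ (t : MuTerm X) {ρ : X → Language X} {g : X → K}, (∀ x, IsWordSup v (ρ x) (g x)) →
      IsWordSup v (langEval ρ t) (eval g t)
  | .var x, _, _, h => by rw [hev.var]; exact h x
  | .zero, _, _, _ => by rw [hev.zero]; exact isWordSup_zero v
  | .one, _, _, _ => by rw [hev.one]; exact isWordSup_one v
  | .add s t, _, _, h => by
      rw [hev.add]
      exact (hev.isWordSup_eval hK v s h).add (hev.isWordSup_eval hK v t h)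
  | .mul s t, _, _, h => by
      rw [hev.mul]
      exact (hev.isWordSup_eval hK v s h).mul (hev.isWordSup_eval hK v t h)
  | .mu x t, ρ, g, h => by
      have hiter : ∀ n, IsWordSup v ((fun a => langEval (Function.update ρ x a) t)^[n] 0)
          ((fun a => eval (Function.update g x a) t)^[n] 0) := by
        intro n
        induction n with
        | zero => exact isWordSup_zero v
        | succ n ih =>
          simp only [Function.iterate_succ_apply']
          refine hev.isWordSup_eval hK v t fun z => ?_
          rcases eq_or_ne z x with rfl | hzx
          · simpa using ih
          · simpa [hzx] using h z
      refine IsWordSup.iSup hiter fun c d => ?_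
      simpa only [hev.eval_napprox] using hK X eval hev g c d x t

theorem eval_eq_of_langEval_eq (hK : MuContinuous K) (hev : IsInterp eval) {s t : MuTerm X}
    (h : langEval (fun x => {[x]}) s = langEval (fun x => {[x]}) t) (v : X → K) :
    eval v s = eval v t := by
  have hvar : ∀ x, IsWordSup v {[x]} (v x) := isWordSup_singleton v
  exact (hev.isWordSup_eval hK v s hvar).unique (h ▸ hev.isWordSup_eval hK v t hvar)

end IsInterp

section Equivalence

variable {X : Type} [DecidableEq X] [Infinite X]

def EqInMuContinuous (s t : MuTerm X) : Prop :=
  ∀ (K : Type) [ChomskyAlgebra K], MuContinuous K →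
    ∀ eval : (X → K) → MuTerm X → K, IsInterp eval → ∀ v : X → K, eval v s = eval v t

def EqInLanguages (s t : MuTerm X) : Prop :=
  ∀ (Y : Type) (σ : X → Language Y) (τ : MuTerm X → Language Y),
    IsLangInterp τ → (∀ x : X, τ (.var x) = σ x) → τ s = τ t

def EqCanonically (s t : MuTerm X) : Prop :=
  ∀ L : MuTerm X → Language X, IsCanonicalInterp L → L s = L t

theorem EqInMuContinuous.eqInLanguages {s t : MuTerm X} (h : EqInMuContinuous s t) :
    EqInLanguages s t := fun _ σ _ hτ hvar => by
  rw [hτ.eq_langEval hvar, hτ.eq_langEval hvar]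
  exact h _ muContinuous_language _ isInterp_langEval σ

theorem EqInLanguages.eqCanonically {s t : MuTerm X} (h : EqInLanguages s t) :
    EqCanonically s t := fun L hL => h X _ L hL.1 hL.2

theorem EqCanonically.eqInMuContinuous {s t : MuTerm X} (h : EqCanonically s t) :
    EqInMuContinuous s t := fun _ _ hK _ hev =>
  hev.eval_eq_of_langEval_eq hK (h _ isCanonicalInterp_langEval)

end Equivalence

/-- For μ-expressions `s, t ∈ T X`, the following are equivalent:
(i) `σ(s) = σ(t)` for every interpretation `σ` over a μ-continuous Chomsky
algebra `K`; (ii) `τ(s) = τ(t)` for the language interpretation `τ` induced by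
any assignment of languages over any `Y` to the variables; (iii)
`L_X(s) = L_X(t)` for the canonical interpretation `L_X`. -/
theorem statement0 {X : Type} [DecidableEq X] [Infinite X] (s t : MuTerm X) :
    ((∀ (K : Type) [ChomskyAlgebra K], MuContinuous K →
        ∀ eval : (X → K) → MuTerm X → K, IsInterp eval →
          ∀ v : X → K, eval v s = eval v t) ↔
      (∀ (Y : Type) (σ : X → Language Y) (τ : MuTerm X → Language Y),
        IsLangInterp τ → (∀ x : X, τ (.var x) = σ x) → τ s = τ t)) ∧
    ((∀ (Y : Type) (σ : X → Language Y) (τ : MuTerm X → Language Y),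
        IsLangInterp τ → (∀ x : X, τ (.var x) = σ x) → τ s = τ t) ↔
      (∀ L : MuTerm X → Language X, IsCanonicalInterp L → L s = L t)) :=
  ⟨⟨EqInMuContinuous.eqInLanguages,
      fun h => (EqInLanguages.eqCanonically h).eqInMuContinuous⟩,
    ⟨EqInLanguages.eqCanonically,
      fun h => (EqCanonically.eqInMuContinuous h).eqInLanguages⟩⟩
end

section
/- Let K be a μ-continuous Chomsky algebra, σ : T X → K an interpretation over K, and τ : T X → P(X*) a map that is a homomorphism for the semiring operations on languages with τ(μx.t) = ⋃_{n≥0} τ(nx.t), such that for all x ∈ X and all s, u ∈ T X, σ(s·x·u) = sup_{w ∈ τ(x)} σ(s)·σ̄(w)·σ(u). Then for all s, t, u ∈ T X, the supremum sup_{w ∈ τ(t)} σ(s)·σ̄(w)·σ(u) exists in K and equals σ(s·t·u). -/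
/-!
The proof is an induction on `t` in which the hypothesis for `μx.t` is available for every
approximant `nx.t`. This is well founded: in the ordinal semantics that interprets `μx.t` as the
successor of the supremum of the iterates of `t` from `0`, every approximant lies strictly below
the μ-term. The cases match the operations on languages with operations on suprema: `0` and `1`
are trivial, union gives a join, a μ-term is a supremum of approximants by μ-continuity, and for
a product `a·b` the word `w₁w₂ ∈ τ(a)τ(b)` is split by taking first the supremum over `w₁`, in
context `s` and `ofWord w₂ · u`, and then over `w₂`, in context `s·a` and `u`.
-/

namespace MuTerm

variable {X : Type} [DecidableEq X]

theorem fv_subset_vars : ∀ t : MuTerm X, fv t ⊆ vars t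
  | var _ | zero | one => by simp [fv, vars]
  | add s t | mul s t => by
      simpa only [fv, vars] using Finset.union_subset_union (fv_subset_vars s) (fv_subset_vars t)
  | mu x t => by
      simp only [fv, vars]
      exact Finset.sdiff_subset.trans ((fv_subset_vars t).trans (Finset.subset_insert _ _))

noncomputable def rank : MuTerm X → (X → Ordinal.{0}) → Ordinal.{0}
  | var x, V => V x
  | zero, _ | one, _ => 0
  | add s t, V | mul s t, V => Order.succ (max (rank s V) (rank t V))
  | mu x t, V => Order.succ (⨆ n : ℕ, (fun a => rank t (Function.update V x a))^[n] 0)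

theorem rank_mu_congr {x x' : X} {t t' : MuTerm X} {V V' : X → Ordinal}
    (h : ∀ a, rank t (Function.update V x a) = rank t' (Function.update V' x' a)) :
    rank (mu x t) V = rank (mu x' t') V' := by
  simp only [rank, h]

theorem rank_congr : ∀ (t : MuTerm X) {V V' : X → Ordinal}, Set.EqOn V V' (fv t) →
    rank t V = rank t V'
  | var x, V, V', h => h (by simp [fv])
  | zero, _, _, _ | one, _, _, _ => rfl
  | add s t, V, V', h | mul s t, V, V', h => by
      simp only [fv, Finset.coe_union] at h
      simp only [rank, rank_congr s (h.mono Set.subset_union_left),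
        rank_congr t (h.mono Set.subset_union_right)]
  | mu x t, V, V', h => rank_mu_congr fun a => rank_congr t fun y hy => by
      by_cases hyx : y = x
      · simp [hyx]
      · simpa [Function.update_of_ne hyx] using h (by simp [fv, hy, hyx])

theorem rank_rename (y z : X) : ∀ (t : MuTerm X) (V : X → Ordinal), z ∉ vars t →
    rank (rename y z t) V = rank t (Function.update V y (V z))
  | var p, V, _ => by
      by_cases h : p = y <;> simp [rename, rank, h]
  | zero, _, _ | one, _, _ => rfl
  | add s t, V, hz | mul s t, V, hz => by
      simp only [vars, Finset.mem_union, not_or] at hz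
      simp only [rename, rank, rank_rename y z s V hz.1, rank_rename y z t V hz.2]
  | mu p t, V, hz => by
      simp only [vars, Finset.mem_insert, not_or] at hz
      simp only [rename]
      split_ifs with hpy
      · refine rank_mu_congr fun a => rank_congr t fun q _ => ?_
        by_cases hqp : q = p
        · simp [hqp]
        · simp [Function.update_of_ne hqp, Function.update_of_ne (hpy ▸ hqp)]
      · refine rank_mu_congr fun a => ?_
        rw [rank_rename y z t _ hz.2]
        refine rank_congr t fun q _ => ?_
        simp only [Function.update_apply]
        split_ifs <;> simp_all

variable [Infinite X]

theorem rank_subst (x : X) (u : MuTerm X) : ∀ (t : MuTerm X) (V : X → Ordinal),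
    rank (subst x u t) V = rank t (Function.update V x (rank u V))
  | var y, V => by
      rw [subst]
      by_cases h : y = x <;> simp [rank, h]
  | zero, _ | one, _ => by rw [subst]; rfl
  | add s t, V | mul s t, V => by
      rw [subst]
      simp only [rank, rank_subst x u s V, rank_subst x u t V]
  | mu y t, V => by
      rw [subst]
      split_ifs with hyx
      · subst hyx
        exact rank_mu_congr fun a => by rw [Function.update_idem]
      · have hz := Classical.choose_spec (Infinite.exists_notMem_finset (vars t ∪ fv u ∪ {x}))
        generalize Classical.choose (Infinite.exists_notMem_finset (vars t ∪ fv u ∪ {x})) = z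
          at hz ⊢
        simp only [Finset.mem_union, Finset.mem_singleton, not_or] at hz
        obtain ⟨⟨hzt, hzu⟩, hzx⟩ := hz
        dsimp only
        refine rank_mu_congr fun a => ?_
        have hu : rank u (Function.update V z a) = rank u V :=
          rank_congr u fun q hq => Function.update_of_ne (ne_of_mem_of_not_mem hq hzu) _ _
        rw [rank_subst x u _ _, hu, rank_rename y _ t _ hzt]
        refine rank_congr t fun q hq => ?_
        have hqz := ne_of_mem_of_not_mem (fv_subset_vars t hq) hzt
        simp only [Function.update_apply]
        split_ifs <;> simp_all
  termination_by t => t.size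
  decreasing_by all_goals simp only [size, size_rename]; omega

theorem rank_napprox (x : X) (t : MuTerm X) (V : X → Ordinal) (n : ℕ) :
    rank (napprox n x t) V = (fun a => rank t (Function.update V x a))^[n] 0 := by
  induction n with
  | zero => rfl
  | succ n ih => rw [napprox, rank_subst, ih, Function.iterate_succ_apply']

theorem rank_napprox_lt (x : X) (t : MuTerm X) (V : X → Ordinal) (n : ℕ) :
    rank (napprox n x t) V < rank (mu x t) V := by
  rw [rank_napprox, rank]
  exact Order.lt_succ_of_le (le_ciSup Ordinal.bddAbove_of_small n)

@[elab_as_elim]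
theorem approx_induction {P : MuTerm X → Prop} (var : ∀ x, P (var x)) (zero : P zero)
    (one : P one) (add : ∀ s t, P s → P t → P (add s t))
    (mul : ∀ s t, P s → P t → P (mul s t))
    (mu : ∀ x t, (∀ n, P (napprox n x t)) → P (mu x t)) (t : MuTerm X) : P t := by
  refine (InvImage.wf (rank · fun _ => 0) wellFounded_lt).induction t fun t ih => ?_
  have lt_succ_max_left (a b : Ordinal) : a < Order.succ (max a b) :=
    Order.lt_succ_of_le le_sup_left
  have lt_succ_max_right (a b : Ordinal) : b < Order.succ (max a b) :=
    Order.lt_succ_of_le le_sup_right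
  cases t with
  | var x => exact var x
  | zero => exact zero
  | one => exact one
  | add s t => exact add s t (ih s (lt_succ_max_left ..)) (ih t (lt_succ_max_right ..))
  | mul s t => exact mul s t (ih s (lt_succ_max_left ..)) (ih t (lt_succ_max_right ..))
  | mu x t => exact mu x t fun n => ih _ (rank_napprox_lt x t _ n)

end MuTerm

section WordProds

variable {X K : Type} [Monoid K] (f : X → K) (c d : K)

theorem wordProd_append (w₁ w₂ : List X) :
    wordProd f (w₁ ++ w₂) = wordProd f w₁ * wordProd f w₂ := by
  simp [wordProd]

def scaledWordProds (L : Language X) : Set K :=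
  {y | ∃ w ∈ L, y = c * wordProd f w * d}

theorem scaledWordProds_eq_image (L : Language X) :
    scaledWordProds f c d L = (fun w => c * wordProd f w * d) '' (L : Set (List X)) := by
  ext y
  exact ⟨fun ⟨w, hw, h⟩ => ⟨w, hw, h.symm⟩, fun ⟨w, hw, h⟩ => ⟨w, hw, h.symm⟩⟩

theorem scaledWordProds_zero : scaledWordProds f c d 0 = ∅ := by
  simp [scaledWordProds, Language.notMem_zero]

theorem scaledWordProds_one : scaledWordProds f c d 1 = {c * d} := by
  simp [scaledWordProds, Language.mem_one, wordProd]

theorem scaledWordProds_add (L M : Language X) :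
    scaledWordProds f c d (L + M) = scaledWordProds f c d L ∪ scaledWordProds f c d M := by
  ext y
  simp only [scaledWordProds, Set.mem_ofPred_eq, Set.mem_union, Language.mem_add,
    or_and_right, exists_or]

theorem scaledWordProds_mul (L M : Language X) :
    scaledWordProds f c d (L * M) =
      ⋃ w₂ ∈ M, scaledWordProds f c (wordProd f w₂ * d) L := by
  ext y
  simp only [scaledWordProds, Set.mem_ofPred_eq, Set.mem_iUnion₂, Language.mem_mul]
  constructor
  · rintro ⟨_, ⟨w₁, hw₁, w₂, hw₂, rfl⟩, rfl⟩
    exact ⟨w₂, hw₂, w₁, hw₁, by simp only [wordProd_append, mul_assoc]⟩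
  · rintro ⟨w₂, hw₂, w₁, hw₁, rfl⟩
    exact ⟨w₁ ++ w₂, ⟨w₁, hw₁, w₂, hw₂, rfl⟩, by
      simp only [wordProd_append, mul_assoc]⟩

theorem scaledWordProds_iSup {ι : Type*} (L : ι → Language X) :
    scaledWordProds f c d (⨆ i, L i) = ⋃ i, scaledWordProds f c d (L i) := by
  ext y
  simp only [scaledWordProds, Set.mem_ofPred_eq, Set.mem_iUnion, Language.mem_iSup]
  exact ⟨fun ⟨w, ⟨i, hw⟩, hy⟩ => ⟨i, w, hw, hy⟩,
    fun ⟨i, w, hw, hy⟩ => ⟨w, ⟨i, hw⟩, hy⟩⟩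

end WordProds

theorem isLUB_biUnion_of_isLUB {ι α : Type*} [Preorder α] {S : Set ι} {s : ι → Set α}
    {u : ι → α} {c : α} (hs : ∀ i ∈ S, IsLUB (s i) (u i)) (hu : IsLUB (u '' S) c) :
    IsLUB (⋃ i ∈ S, s i) c := by
  refine ⟨?_, fun b hb => hu.2 ?_⟩
  · simp only [mem_upperBounds, Set.mem_iUnion₂]
    rintro y ⟨i, hi, hy⟩
    exact ((hs i hi).1 hy).trans (hu.1 ⟨i, hi, rfl⟩)
  · rintro _ ⟨i, hi, rfl⟩
    exact (hs i hi).2 fun y hy => hb (Set.mem_biUnion hi hy)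

def MuTerm.ofWord {X : Type} : List X → MuTerm X
  | [] => .one
  | x :: w => .mul (.var x) (MuTerm.ofWord w)

def HasWordSup {X K : Type} [IdemSemiring K] (eval : (X → K) → MuTerm X → K) (v : X → K)
    (τ : MuTerm X → Language X) (t : MuTerm X) : Prop :=
  ∀ s u, IsLUB (scaledWordProds v (eval v s) (eval v u) (τ t)) (eval v s * eval v t * eval v u)

section Interp

variable {X K : Type} [DecidableEq X] [Infinite X] [ChomskyAlgebra K]
  {eval : (X → K) → MuTerm X → K} {v : X → K} {τ : MuTerm X → Language X}

theorem IsInterp.eval_ofWord (hσ : IsInterp eval) (w : List X) :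
    eval v (MuTerm.ofWord w) = wordProd v w := by
  induction w with
  | nil => simp [MuTerm.ofWord, hσ.one, wordProd]
  | cons x w ih => simp [MuTerm.ofWord, hσ.mul, hσ.var, ih, wordProd]

theorem hasWordSup_zero (hσ : IsInterp eval) (hτ : IsLangInterp τ) :
    HasWordSup eval v τ .zero := fun s u => by
  rw [hτ.zero, scaledWordProds_zero, hσ.zero, mul_zero, zero_mul, ← bot_eq_zero]
  exact isLUB_empty

theorem hasWordSup_one (hσ : IsInterp eval) (hτ : IsLangInterp τ) :
    HasWordSup eval v τ .one := fun s u => by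
  simp [hσ.one, hτ.one, scaledWordProds_one]

theorem HasWordSup.add (hσ : IsInterp eval) (hτ : IsLangInterp τ) {a b : MuTerm X}
    (ha : HasWordSup eval v τ a) (hb : HasWordSup eval v τ b) :
    HasWordSup eval v τ (.add a b) := fun s u => by
  rw [hτ.add, scaledWordProds_add, hσ.add, mul_add, add_mul, add_eq_sup]
  exact (ha s u).union (hb s u)

theorem HasWordSup.mul (hσ : IsInterp eval) (hτ : IsLangInterp τ) {a b : MuTerm X}
    (ha : HasWordSup eval v τ a) (hb : HasWordSup eval v τ b) :
    HasWordSup eval v τ (.mul a b) := fun s u => by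
  rw [hτ.mul, scaledWordProds_mul, hσ.mul, ← mul_assoc]
  -- the suffix `w₂` of `w₁w₂ ∈ τ(a)τ(b)` is absorbed into the right context `ofWord w₂ · u`
  refine isLUB_biUnion_of_isLUB (S := (τ b : Set (List X)))
    (u := fun w₂ => eval v s * eval v a * wordProd v w₂ * eval v u) (fun w₂ _ => ?_) ?_
  · simpa only [hσ.mul, hσ.eval_ofWord, mul_assoc] using ha s (.mul (MuTerm.ofWord w₂) u)
  · simpa only [scaledWordProds_eq_image, hσ.mul] using hb (.mul s a) u

theorem hasWordSup_mu (hK : MuContinuous K) (hσ : IsInterp eval) (hτ : IsLangInterp τ)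
    {x : X} {t : MuTerm X} (h : ∀ n, HasWordSup eval v τ (MuTerm.napprox n x t)) :
    HasWordSup eval v τ (.mu x t) := fun s u => by
  rw [hτ.mu, scaledWordProds_iSup]
  exact (isLUB_iUnion_iff_of_isLUB (fun n => h n s u) _).1 (hK X eval hσ v _ _ x t)

theorem hasWordSup (hK : MuContinuous K) (hσ : IsInterp eval) (hτ : IsLangInterp τ)
    (hvar : ∀ x, HasWordSup eval v τ (.var x)) (t : MuTerm X) : HasWordSup eval v τ t :=
  MuTerm.approx_induction hvar (hasWordSup_zero hσ hτ) (hasWordSup_one hσ hτ)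
    (fun _ _ => .add hσ hτ) (fun _ _ => .mul hσ hτ) (fun _ _ => hasWordSup_mu hK hσ hτ) t

end Interp

/-- if `σ(s·x·u) = sup_{w ∈ τ(x)} σ(s)·σ̄(w)·σ(u)` for all
variables `x`, then `σ(s·t·u) = sup_{w ∈ τ(t)} σ(s)·σ̄(w)·σ(u)` for all terms
`t` (in particular the supremum exists). -/
theorem statement6 {X K : Type} [DecidableEq X] [Infinite X] [ChomskyAlgebra K]
    (hK : MuContinuous K) (eval : (X → K) → MuTerm X → K) (hσ : IsInterp eval)
    (v : X → K) (τ : MuTerm X → Language X) (hτ : IsLangInterp τ)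
    (hbase : ∀ (x : X) (s u : MuTerm X),
      IsLUB {y : K | ∃ w ∈ τ (.var x), y = eval v s * wordProd v w * eval v u}
        (eval v (.mul (.mul s (.var x)) u)))
    (s t u : MuTerm X) :
    IsLUB {y : K | ∃ w ∈ τ t, y = eval v s * wordProd v w * eval v u}
      (eval v (.mul (.mul s t) u)) := by
  have hvar (x : X) : HasWordSup eval v τ (.var x) := fun s u => by
    simpa only [scaledWordProds, hσ.mul] using hbase x s u
  simpa only [scaledWordProds, hσ.mul] using hasWordSup hK hσ hτ hvar t s u
end
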